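/- For integers n ≥ 0, r ≥ 2, k ≥ 1 with n - k not divisible by r, the number of permutations of {1,...,n} in which the cycle containing 1 has length k and all other cycles have length not divisible by r equals the number of permutations of {1,...,n} in which the cycle containing 1 has length k+1 and all other cycles have length not divisible by r. -/

import Mathlib

/-!
Write `d_r(m)` for the number of permutations of an `m`-element set with no cycle length
divisible by `r`. Cutting `σ x` out of the cycle of `x` (passing to `σ * swap x (σ x)`) and
then deleting the resulting fixed point gives `|Q_{r,k+1}(n)| = (n - 1) |Q_{r,k}(n - 1)|`, hence
`|Q_{r,k}(n)| = (n-1)!/(n-k)! · d_r(n - k)`, and the theorem reduces to `d_r(m) = m d_r(m - 1)`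
for `r ∤ m`. Sorting permutations by the length of the cycle through a point gives
`m a_m = ∑_{i < m, r ∤ m - i} a_i` for `a_m = d_r(m) / m!`; subtracting this identity at `m - 1`
shows by strong induction that `a_m = a_{m-1}` whenever `r ∤ m`.
-/

/-- Permutations in which the cycle containing `x` has length `k` and every
other cycle has length not divisible by `r`. -/
def QProp (r k : ℕ) {α : Type*} (x : α) (σ : Equiv.Perm α) : Prop :=
  Function.minimalPeriod ⇑σ x = k ∧
    ∀ y : α, (∀ i : ℕ, (σ ^ i) x ≠ y) → ¬ r ∣ Function.minimalPeriod ⇑σ y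

open Equiv Function

theorem Function.Semiconj.minimalPeriod_eq {α β : Type*} {f : α → α} {g : β → β}
    {e : α → β} (h : Semiconj e f g) (he : Injective e) (x : α) :
    minimalPeriod g (e x) = minimalPeriod f x := by
  rw [minimalPeriod_eq_minimalPeriod_iff]
  intro n
  simp only [IsPeriodicPt, IsFixedPt, ← h.iterate_right n x, he.eq_iff]

theorem Function.minimalPeriod_eq_of_eqOn {α : Type*} {f g : α → α} {s : Set α}
    (hs : Set.MapsTo f s s) (hfg : Set.EqOn f g s) {x : α} (hx : x ∈ s) :
    minimalPeriod f x = minimalPeriod g x := by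
  have hf : Semiconj Subtype.val (hs.restrict f s s) f := fun _ => rfl
  have hg : Semiconj Subtype.val (hs.restrict f s s) g := fun w => hfg w.2
  exact (hf.minimalPeriod_eq Subtype.val_injective ⟨x, hx⟩).trans
    (hg.minimalPeriod_eq Subtype.val_injective ⟨x, hx⟩).symm

theorem Nat.card_subtype_eq_sum_card_fiberwise {α β : Type*} [Finite α] {p : α → Prop}
    (f : α → β) (t : Finset β) (hf : ∀ a, p a → f a ∈ t) :
    Nat.card {a // p a} = ∑ b ∈ t, Nat.card {a // p a ∧ f a = b} := by
  classical
  have := Fintype.ofFinite α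
  simp only [Nat.card_eq_fintype_card, Fintype.card_subtype, ← Finset.filter_filter]
  exact Finset.card_eq_sum_card_fiberwise fun a ha => hf a (Finset.mem_filter.1 ha).2

theorem Nat.card_subtype_ne {α : Type*} [Finite α] (y : α) :
    Nat.card {z // z ≠ y} = Nat.card α - 1 := by
  classical
  have := Fintype.ofFinite α
  simp [Nat.card_eq_fintype_card]

theorem Nat.mul_descFactorial_sub_one (n k : ℕ) :
    n * (n - 1).descFactorial k = n.descFactorial (k + 1) := by
  cases n with
  | zero => simp
  | succ n => rw [Nat.succ_sub_one, Nat.succ_descFactorial_succ]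

open Finset in
theorem sum_range_add_one_ite_dvd_sub_eq {M : Type*} [AddCommMonoid M] {r m : ℕ}
    {a : ℕ → M} (hm : ¬ r ∣ m + 1) (ha : ∀ i < m, ¬ r ∣ i + 1 → a (i + 1) = a i) :
    ∑ i ∈ range (m + 1), (if r ∣ m + 1 - i then a i else 0) =
      ∑ i ∈ range m, if r ∣ m - i then a i else 0 := by
  rw [sum_range_succ', Nat.sub_zero, if_neg hm, add_zero]
  refine sum_congr rfl fun i hi => ?_
  have hi := mem_range.1 hi
  rw [show m + 1 - (i + 1) = m - i by omega]
  split_ifs with h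
  · refine ha i hi fun h' => hm ?_
    rw [show m + 1 = m - i + (i + 1) by omega]
    exact dvd_add h h'
  · rfl

theorem apply_add_one_eq_of_mul_eq_sum {K : Type*} [Field K] [CharZero K] {r : ℕ} {a : ℕ → K}
    (h : ∀ m, m * a m = ∑ i ∈ Finset.range m, if r ∣ m - i then 0 else a i) {m : ℕ}
    (hm : ¬ r ∣ m + 1) : a (m + 1) = a m := by
  induction m using Nat.strong_induction_on with
  | _ m ih =>
    -- The full sum gains exactly the term `a m` under `m ↦ m + 1`, while by the induction
    -- hypothesis the terms with `r ∣ m - i` only shift.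
    have hsplit : ∀ m, m * a m = ∑ i ∈ Finset.range m, a i -
        ∑ i ∈ Finset.range m, if r ∣ m - i then a i else 0 := fun m => by
      rw [h, ← Finset.sum_sub_distrib]
      exact Finset.sum_congr rfl fun i _ => by split_ifs <;> ring
    have key := hsplit (m + 1)
    rw [Finset.sum_range_succ, sum_range_add_one_ite_dvd_sub_eq hm fun i hi => ih i hi] at key
    have hm0 : ((m : K) + 1) ≠ 0 := by exact_mod_cast m.succ_ne_zero
    apply mul_left_cancel₀ hm0
    push_cast at key
    linear_combination key - hsplit m

namespace Equiv.Perm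

variable {α : Type*} {σ τ : Perm α} {x y z : α}

theorem minimalPeriod_eq_ncard_sameCycle (σ : Perm α) (x : α) :
    minimalPeriod σ x = {z | σ.SameCycle x z}.ncard := by
  have h := Nat.card_congr (MulAction.orbitZPowersEquiv σ x)
  rw [Nat.card_zmod] at h
  change minimalPeriod (σ • ·) x = _
  rw [← h, ← Nat.card_coe_set_eq]
  congr 2
  ext z
  simp only [MulAction.mem_orbit_iff, Subtype.exists, Subgroup.mem_zpowers_iff,
    Set.mem_ofPred_eq, SameCycle]
  exact ⟨fun ⟨_, ⟨i, rfl⟩, h⟩ => ⟨i, h⟩, fun ⟨i, h⟩ => ⟨_, ⟨i, rfl⟩, h⟩⟩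

theorem minimalPeriod_pos [Finite α] (σ : Perm α) (x : α) : 0 < minimalPeriod σ x := by
  rw [minimalPeriod_eq_ncard_sameCycle]
  exact (Set.ncard_pos (Set.toFinite _)).2 ⟨x, .rfl⟩

theorem SameCycle.minimalPeriod_eq (h : σ.SameCycle x z) :
    minimalPeriod σ x = minimalPeriod σ z := by
  rw [minimalPeriod_eq_ncard_sameCycle, minimalPeriod_eq_ncard_sameCycle]
  congr 1
  ext w
  exact ⟨h.symm.trans, h.trans⟩

theorem minimalPeriod_subtypePerm {p : α → Prop} (h : ∀ a, p (σ a) ↔ p a) (z : Subtype p) :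
    minimalPeriod (σ.subtypePerm h) z = minimalPeriod σ z :=
  (Semiconj.minimalPeriod_eq (e := Subtype.val) (f := σ.subtypePerm h) (fun _ => rfl)
    Subtype.val_injective z).symm

theorem minimalPeriod_permCongr {β : Type*} (e : α ≃ β) (a : α) :
    minimalPeriod (e.permCongr σ) (e a) = minimalPeriod σ a :=
  Semiconj.minimalPeriod_eq (fun b => by simp [permCongr_apply]) e.injective a

theorem SameCycle.mem_of_mapsTo [Finite α] {s : Set α} (hs : Set.MapsTo σ s s) (hx : x ∈ s)
    (h : σ.SameCycle x z) : z ∈ s := by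
  obtain ⟨n, rfl⟩ := h.exists_nat_pow_eq
  rw [coe_pow]
  exact hs.iterate n hx

theorem sameCycle_iff_exists_pow_eq [Finite α] :
    σ.SameCycle x z ↔ ∃ n : ℕ, (σ ^ n) x = z :=
  ⟨SameCycle.exists_nat_pow_eq, fun ⟨_, h⟩ => h ▸ sameCycle_pow_right.2 .rfl⟩

section MulSwap

variable [DecidableEq α]

theorem mul_swap_apply_left (hy : τ y = y) : (τ * swap x y) x = y := by simp [hy]

theorem mul_swap_apply_right : (τ * swap x y) y = τ x := by simp

theorem mul_swap_apply_of_ne {w : α} (hwx : w ≠ x) (hwy : w ≠ y) :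
    (τ * swap x y) w = τ w := by
  simp [swap_apply_of_ne_of_ne hwx hwy]

theorem sameCycle_mul_swap_iff [Finite α] (hy : τ y = y) (hxy : x ≠ y) :
    (τ * swap x y).SameCycle x z ↔ z = y ∨ τ.SameCycle x z := by
  have hσx : (τ * swap x y) x = y := mul_swap_apply_left hy
  have hσy : (τ * swap x y).SameCycle x y := by
    simpa only [hσx] using sameCycle_apply_right.2 (SameCycle.refl (τ * swap x y) x)
  constructor
  · refine fun h => h.mem_of_mapsTo (s := {z | z = y ∨ τ.SameCycle x z}) ?_ (.inr .rfl)
    rintro w (rfl | hw)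
    · right
      rw [mul_swap_apply_right]
      exact sameCycle_apply_right.2 .rfl
    by_cases hwx : w = x
    · left
      rw [hwx, hσx]
    have hwy : w ≠ y := fun h => hxy ((h ▸ hw).eq_of_right hy)
    right
    rw [mul_swap_apply_of_ne hwx hwy]
    exact sameCycle_apply_right.2 hw
  · rintro (rfl | h)
    · exact hσy
    refine h.mem_of_mapsTo (s := {z | (τ * swap x y).SameCycle x z}) (fun w hw => ?_) .rfl
    by_cases hwx : w = x
    · rw [hwx, Set.mem_ofPred_eq, ← mul_swap_apply_right]
      exact sameCycle_apply_right.2 hσy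
    by_cases hwy : w = y
    · rwa [hwy, hy]
    · rw [Set.mem_ofPred_eq, ← mul_swap_apply_of_ne hwx hwy]
      exact sameCycle_apply_right.2 hw

theorem minimalPeriod_mul_swap_left [Finite α] (hy : τ y = y) (hxy : x ≠ y) :
    minimalPeriod (τ * swap x y) x = minimalPeriod τ x + 1 := by
  have hcycle : {z | (τ * swap x y).SameCycle x z} = insert y {z | τ.SameCycle x z} := by
    ext z
    exact sameCycle_mul_swap_iff hy hxy
  have hy' : y ∉ {z | τ.SameCycle x z} := fun h => hxy (SameCycle.eq_of_right h hy)
  rw [minimalPeriod_eq_ncard_sameCycle, minimalPeriod_eq_ncard_sameCycle, hcycle,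
    Set.ncard_insert_of_notMem hy']

theorem minimalPeriod_mul_swap_of_not_sameCycle [Finite α] (hy : τ y = y) (hxy : x ≠ y)
    (hz : ¬ (τ * swap x y).SameCycle x z) :
    minimalPeriod (τ * swap x y) z = minimalPeriod τ z := by
  refine minimalPeriod_eq_of_eqOn (s := {z | ¬ (τ * swap x y).SameCycle x z})
    (fun w hw => mt sameCycle_apply_right.1 hw) (fun w hw => ?_) hz
  refine mul_swap_apply_of_ne (fun h => hw (h ▸ .rfl)) (fun h => hw ?_)
  exact h ▸ (sameCycle_mul_swap_iff hy hxy).2 (.inl rfl)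

end MulSwap

theorem card_fixing_and_eq_card [DecidableEq α] {y : α} {P : Perm α → Prop}
    {Q : Perm {z // z ≠ y} → Prop}
    (hPQ : ∀ τ (hy : τ y = y),
      P τ ↔ Q (τ.subtypePerm fun _ => (τ.injective.eq_iff' hy).not)) :
    Nat.card {τ : Perm α // τ y = y ∧ P τ} = Nat.card {σ // Q σ} :=
  Nat.card_congr <| (subtypeSubtypeEquivSubtypeInter _ P).symm.trans <|
    ((subtypeEquivRight fun τ => by simp).trans
      (Perm.subtypeEquivSubtypePerm (· ≠ y)).symm).subtypeEquiv fun τ => hPQ τ.1 τ.2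

end Equiv.Perm

open Equiv.Perm

section QProp

variable {α : Type*} {r k : ℕ} {σ τ : Perm α} {x y : α}

theorem qProp_iff [Finite α] : QProp r k x σ ↔
    minimalPeriod σ x = k ∧ ∀ y, ¬ σ.SameCycle x y → ¬ r ∣ minimalPeriod σ y := by
  simp only [QProp, sameCycle_iff_exists_pow_eq, not_exists]

theorem not_dvd_minimalPeriod_of_apply_eq (hr : r ≠ 1) (hy : σ y = y) :
    ¬ r ∣ minimalPeriod σ y := by
  rwa [minimalPeriod_eq_one_iff_isFixedPt.2 hy, Nat.dvd_one]

theorem qProp_mul_swap_iff [DecidableEq α] [Finite α] (hr : r ≠ 1) (hy : τ y = y)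
    (hxy : x ≠ y) : QProp r (k + 1) x (τ * swap x y) ↔ QProp r k x τ := by
  rw [qProp_iff, qProp_iff, minimalPeriod_mul_swap_left hy hxy, add_left_inj]
  refine and_congr_right fun _ => ⟨fun h z hz => ?_, fun h z hz => ?_⟩
  · by_cases hzy : z = y
    · exact hzy ▸ not_dvd_minimalPeriod_of_apply_eq hr hy
    have hz' : ¬ (τ * swap x y).SameCycle x z := by
      rw [sameCycle_mul_swap_iff hy hxy]
      exact not_or.2 ⟨hzy, hz⟩
    rw [← minimalPeriod_mul_swap_of_not_sameCycle hy hxy hz']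
    exact h z hz'
  · rw [minimalPeriod_mul_swap_of_not_sameCycle hy hxy hz]
    exact h z fun h' => hz ((sameCycle_mul_swap_iff hy hxy).2 (.inr h'))

theorem qProp_subtypePerm_iff [Finite α] (hr : r ≠ 1) (hy : τ y = y) (hxy : x ≠ y)
    (h : ∀ a, τ a ≠ y ↔ a ≠ y) :
    QProp r k (⟨x, hxy⟩ : {z // z ≠ y}) (τ.subtypePerm h) ↔ QProp r k x τ := by
  simp only [qProp_iff, minimalPeriod_subtypePerm, sameCycle_subtypePerm, Subtype.forall]
  refine and_congr_right fun _ => ⟨fun h' z hz => ?_, fun h' z _ hz => h' z hz⟩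
  by_cases hzy : z = y
  · exact hzy ▸ not_dvd_minimalPeriod_of_apply_eq hr hy
  · exact h' z hzy hz

end QProp

def NoCycleLengthDvd (r : ℕ) {α : Type*} (σ : Perm α) : Prop :=
  ∀ z, ¬ r ∣ minimalPeriod σ z

section NoCycleLengthDvd

variable {α : Type*} {r k : ℕ} {σ τ : Perm α} {x : α}

theorem noCycleLengthDvd_subtypePerm_iff [Finite α] (hx : τ x = x)
    (h : ∀ a, τ a ≠ x ↔ a ≠ x) :
    NoCycleLengthDvd r (τ.subtypePerm h : Perm {z // z ≠ x}) ↔ QProp r 1 x τ := by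
  simp only [NoCycleLengthDvd, qProp_iff, minimalPeriod_subtypePerm, Subtype.forall,
    minimalPeriod_eq_one_iff_isFixedPt.2 hx, true_and]
  refine forall_congr' fun z => ⟨fun h' hz => h' fun hzx => hz (hzx ▸ .rfl), fun h' hzx => ?_⟩
  exact h' fun hz => hzx (hz.eq_of_left hx).symm

theorem noCycleLengthDvd_and_minimalPeriod_eq_iff [Finite α] :
    NoCycleLengthDvd r σ ∧ minimalPeriod σ x = k ↔ ¬ r ∣ k ∧ QProp r k x σ := by
  rw [qProp_iff]
  constructor
  · rintro ⟨h, rfl⟩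
    exact ⟨h x, rfl, fun z _ => h z⟩
  · rintro ⟨hk, rfl, h⟩
    refine ⟨fun z => ?_, rfl⟩
    by_cases hz : σ.SameCycle x z
    · rwa [← hz.minimalPeriod_eq]
    · exact h z hz

theorem noCycleLengthDvd_permCongr_iff {β : Type*} (e : α ≃ β) :
    NoCycleLengthDvd r (e.permCongr σ) ↔ NoCycleLengthDvd r σ :=
  ⟨fun h a => minimalPeriod_permCongr e a ▸ h (e a),
    fun h b => e.apply_symm_apply b ▸ (minimalPeriod_permCongr e _).symm ▸ h _⟩

end NoCycleLengthDvd

noncomputable def noCycleLengthDvdCount (r m : ℕ) : ℕ :=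
  Nat.card {σ : Perm (Fin m) // NoCycleLengthDvd r σ}

theorem card_noCycleLengthDvd (r : ℕ) (α : Type*) [Finite α] :
    Nat.card {σ : Perm α // NoCycleLengthDvd r σ} = noCycleLengthDvdCount r (Nat.card α) :=
  Nat.card_congr <| (Finite.equivFin α).permCongr.subtypeEquiv fun _ =>
    (noCycleLengthDvd_permCongr_iff _).symm

section Count

variable {α : Type*} [DecidableEq α] [Finite α] {r k : ℕ}

theorem card_qProp_one (x : α) :
    Nat.card {σ : Perm α // QProp r 1 x σ} = noCycleLengthDvdCount r (Nat.card α - 1) := by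
  have hfix : ∀ σ : Perm α, QProp r 1 x σ ↔ σ x = x ∧ QProp r 1 x σ := fun σ =>
    ⟨fun h => ⟨minimalPeriod_eq_one_iff_isFixedPt.1 h.1, h⟩, And.right⟩
  rw [Nat.card_congr (subtypeEquivRight hfix), ← Nat.card_subtype_ne x,
    ← card_noCycleLengthDvd]
  exact card_fixing_and_eq_card fun τ hx => (noCycleLengthDvd_subtypePerm_iff hx _).symm

theorem card_qProp_add_one_and_apply_eq (hr : r ≠ 1) {x y : α} (hxy : x ≠ y) :
    Nat.card {σ : Perm α // QProp r (k + 1) x σ ∧ σ x = y} =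
      Nat.card {σ : Perm {z // z ≠ y} // QProp r k ⟨x, hxy⟩ σ} := by
  have hswap : ∀ σ : Perm α, QProp r (k + 1) x σ ∧ σ x = y ↔
      (σ * swap x y) y = y ∧ QProp r k x (σ * swap x y) := fun σ => by
    rw [mul_swap_apply_right, and_comm, and_congr_right_iff]
    intro hσ
    have := qProp_mul_swap_iff (k := k) hr (τ := σ * swap x y) (by rwa [mul_swap_apply_right]) hxy
    rwa [mul_swap_mul_self] at this
  rw [Nat.card_congr ((Equiv.mulRight (swap x y)).subtypeEquiv
    (q := fun τ => τ y = y ∧ QProp r k x τ) hswap)]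
  exact card_fixing_and_eq_card fun τ hy => (qProp_subtypePerm_iff hr hy hxy _).symm

theorem card_qProp_add_one (hr : r ≠ 1) (x : α) (j : ℕ) :
    Nat.card {σ : Perm α // QProp r (j + 1) x σ} =
      (Nat.card α - 1).descFactorial j * noCycleLengthDvdCount r (Nat.card α - 1 - j) := by
  induction j generalizing α with
  | zero => simpa using card_qProp_one x
  | succ j ih =>
    have := Fintype.ofFinite α
    have hmoves (σ : Perm α) (h : QProp r (j + 2) x σ) : σ x ∈ Finset.univ.erase x := by
      refine Finset.mem_erase.2 ⟨fun hx => ?_, Finset.mem_univ _⟩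
      simpa [minimalPeriod_eq_one_iff_isFixedPt.2 hx] using h.1
    rw [Nat.card_subtype_eq_sum_card_fiberwise _ _ hmoves]
    have hfiber : ∀ y ∈ Finset.univ.erase x,
        Nat.card {σ // QProp r (j + 2) x σ ∧ σ x = y} = (Nat.card α - 1 - 1).descFactorial j *
          noCycleLengthDvdCount r (Nat.card α - 1 - 1 - j) := by
      intro y hy
      rw [card_qProp_add_one_and_apply_eq hr (Finset.ne_of_mem_erase hy).symm, ih,
        Nat.card_subtype_ne]
    rw [Finset.sum_congr rfl hfiber, Finset.sum_const,
      Finset.card_erase_of_mem (Finset.mem_univ x), Finset.card_univ,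
      ← Nat.card_eq_fintype_card, smul_eq_mul, ← mul_assoc,
      Nat.mul_descFactorial_sub_one, Nat.sub_sub _ 1 j, add_comm 1 j]

theorem noCycleLengthDvdCount_add_one_eq_sum (hr : r ≠ 1) (n : ℕ) :
    noCycleLengthDvdCount r (n + 1) = ∑ j ∈ Finset.range (n + 1),
      if r ∣ j + 1 then 0 else n.descFactorial j * noCycleLengthDvdCount r (n - j) := by
  have hlen (σ : Perm (Fin (n + 1))) (_ : NoCycleLengthDvd r σ) :
      minimalPeriod σ 0 - 1 ∈ Finset.range (n + 1) := by
    have := minimalPeriod_le_card (f := σ) (x := 0)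
    simp only [Fintype.card_fin] at this
    exact Finset.mem_range.2 (by omega)
  rw [noCycleLengthDvdCount, Nat.card_subtype_eq_sum_card_fiberwise _ _ hlen]
  refine Finset.sum_congr rfl fun j _ => ?_
  have hfiber (σ : Perm (Fin (n + 1))) : NoCycleLengthDvd r σ ∧ minimalPeriod σ 0 - 1 = j ↔
      ¬ r ∣ j + 1 ∧ QProp r (j + 1) 0 σ := by
    rw [← noCycleLengthDvd_and_minimalPeriod_eq_iff]
    have := minimalPeriod_pos σ 0
    exact and_congr_right fun _ => by omega
  rw [Nat.card_congr (subtypeEquivRight hfiber)]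
  split_ifs with hj
  · simp [hj]
  · simp [hj, card_qProp_add_one hr]

theorem mul_noCycleLengthDvdCount_div_factorial (hr : r ≠ 1) (m : ℕ) :
    m * ((noCycleLengthDvdCount r m : ℚ) / m.factorial) = ∑ i ∈ Finset.range m,
      if r ∣ m - i then 0 else (noCycleLengthDvdCount r i : ℚ) / i.factorial := by
  cases m with
  | zero => simp
  | succ n =>
    have hfac : ((n + 1 : ℕ) : ℚ) * (noCycleLengthDvdCount r (n + 1) / (n + 1).factorial) =
        noCycleLengthDvdCount r (n + 1) / n.factorial := by
      rw [Nat.factorial_succ]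
      push_cast
      field_simp
    rw [hfac, ← Finset.sum_range_reflect, noCycleLengthDvdCount_add_one_eq_sum hr, Nat.cast_sum,
      Finset.sum_div]
    refine Finset.sum_congr rfl fun j hj => ?_
    have hj := Finset.mem_range.1 hj
    rw [show n + 1 - (n + 1 - 1 - j) = j + 1 by omega, show n + 1 - 1 - j = n - j by omega]
    split_ifs
    · simp
    · have hd : (n.descFactorial j : ℚ) ≠ 0 := by
        exact_mod_cast Nat.descFactorial_eq_zero_iff_lt.not.2 (by omega)
      rw [← Nat.factorial_mul_descFactorial (Nat.le_of_lt_succ hj)]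
      push_cast
      field_simp

theorem noCycleLengthDvdCount_add_one_of_not_dvd (hr : r ≠ 1) {m : ℕ} (hm : ¬ r ∣ m + 1) :
    noCycleLengthDvdCount r (m + 1) = (m + 1) * noCycleLengthDvdCount r m := by
  have h := apply_add_one_eq_of_mul_eq_sum (mul_noCycleLengthDvdCount_div_factorial hr) hm
  rw [Nat.factorial_succ, Nat.cast_mul] at h
  field_simp at h
  exact_mod_cast h

end Count

/-- `|Q_{r,k}(n)| = |Q_{r,k+1}(n)|` when `r ∤ n - k`. -/
theorem stmt4 (n r k : ℕ) (hk : 1 ≤ k) (hd : ¬ r ∣ n - k) :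
    Nat.card {σ : Equiv.Perm (Fin n) // QProp r k
        (⟨0, by
          rcases Nat.eq_zero_or_pos n with h | h
          · subst h; simp at hd
          · exact h⟩ : Fin n) σ} =
      Nat.card {σ : Equiv.Perm (Fin n) // QProp r (k + 1)
        (⟨0, by
          rcases Nat.eq_zero_or_pos n with h | h
          · subst h; simp at hd
          · exact h⟩ : Fin n) σ} := by
  have hr : r ≠ 1 := by
    rintro rfl
    exact hd (one_dvd _)
  obtain ⟨j, rfl⟩ : ∃ j, k = j + 1 := ⟨k - 1, by omega⟩
  obtain ⟨m, hm⟩ : ∃ m, n - (j + 1) = m + 1 :=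
    Nat.exists_eq_add_one.2 (Nat.pos_of_ne_zero fun h => hd (h ▸ dvd_zero r))
  have hn : 0 < n := by omega
  rw [card_qProp_add_one hr (⟨0, hn⟩ : Fin n), card_qProp_add_one hr (⟨0, hn⟩ : Fin n),
    Nat.card_fin, Nat.descFactorial_succ, show n - 1 - j = m + 1 by omega,
    show n - 1 - (j + 1) = m by omega, noCycleLengthDvdCount_add_one_of_not_dvd hr (hm ▸ hd)]
  ring
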